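/- arXiv:1811.05674 — 5 statements merged into one kernel-verified Lean document; each statement's English description precedes it below -/
import Mathlib

section
/- Let n ≥ 1, let α_0 < α_1 < ⋯ < α_n be real numbers, let s_1, …, s_n ∈ {−1, 1}, and let t_0, t_1, …, t_n be positive real numbers satisfying t_0 > 0 and, for each i = 1, …, n, t_{i−1} ≤ t_i if s_i = −1 and t_{i−1} < t_i if s_i = 1. Define the (n+1)×(n+1) real matrix W(t;α) whose (i,j) entry (indices 0 ≤ i, j ≤ n) equals s_j · t_i^{α_j} when j > i and equals t_i^{α_j} when j ≤ i. Then the generalized Vandermonde determinant det(W(t;α)) is strictly positive. -/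
open Matrix MeasureTheory intervalIntegral Set


section Helpers

variable {ι : Type*} [Fintype ι] [DecidableEq ι]

lemma my_integral_nonneg_Ioo {f : ℝ → ℝ} {a b : ℝ} (hab : a ≤ b)
    (h : ∀ x ∈ Set.Ioo a b, 0 ≤ f x) : 0 ≤ ∫ x in a..b, f x := by
  apply intervalIntegral.integral_nonneg_of_ae_restrict hab
  have hcnt : (({a, b} : Set ℝ)).Countable := (Set.countable_singleton b).insert a
  have hae : ∀ᵐ x ∂(volume : Measure ℝ), x ∉ ({a, b} : Set ℝ) :=
    hcnt.ae_notMem volume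
  rw [Filter.EventuallyLE, MeasureTheory.ae_restrict_iff' measurableSet_Icc]
  filter_upwards [hae] with x hx hxI
  rcases hxI with ⟨h1, h2⟩
  have hxa : x ≠ a := fun hh => hx (by simp [hh])
  have hxb : x ≠ b := fun hh => hx (by simp [hh])
  exact h x ⟨lt_of_le_of_ne h1 (Ne.symm hxa), lt_of_le_of_ne h2 hxb⟩

lemma det_updateRow_sum_basis (M : Matrix ι ι ℝ) (i : ι) (v : ι → ℝ) :
    (M.updateRow i v).det = ∑ j, v j * (M.updateRow i (Pi.single j 1)).det := by
  have key : ∀ (s : Finset ι) (w : ι → (ι → ℝ)),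
      (M.updateRow i (∑ j ∈ s, w j)).det = ∑ j ∈ s, (M.updateRow i (w j)).det := by
    intro s w
    induction s using Finset.induction_on with
    | empty =>
        simp only [Finset.sum_empty]
        have h0 : ((0 : ℝ) • (0 : ι → ℝ)) = (0 : ι → ℝ) := by simp
        rw [← h0, Matrix.det_updateRow_smul]
        simp
    | insert _ _ hk ih =>
        rw [Finset.sum_insert hk, Matrix.det_updateRow_add, ih, Finset.sum_insert hk]
  have hv : v = ∑ j, (v j • (Pi.single j (1:ℝ) : ι → ℝ)) := by
    funext k
    simp [Finset.sum_apply, Pi.single_apply]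
  calc (M.updateRow i v).det
      = (M.updateRow i (∑ j, (fun j' => v j' • (Pi.single j' (1:ℝ) : ι → ℝ)) j)).det := by
        rw [← hv]
    _ = ∑ j, (M.updateRow i (v j • (Pi.single j (1:ℝ) : ι → ℝ))).det := key _ _
    _ = ∑ j, v j * (M.updateRow i (Pi.single j 1)).det := by
        refine Finset.sum_congr rfl fun j _ => ?_
        rw [Matrix.det_updateRow_smul]

end Helpers

section Helpers2

variable {ι : Type*} [Fintype ι] [DecidableEq ι]

lemma det_row_intervalIntegral (M : Matrix ι ι ℝ) (i : ι) (a b : ℝ) (r : ℝ → ι → ℝ)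
    (hr : ContinuousOn r (Set.uIcc a b)) (hM : ∀ j, M i j = ∫ u in a..b, r u j) :
    M.det = ∫ u in a..b, (M.updateRow i (r u)).det := by
  have hcomp : ∀ j : ι, ContinuousOn (fun u => r u j) (Set.uIcc a b) := by
    intro j
    exact (continuousOn_pi.mp hr) j
  have hint : ∀ j : ι, IntervalIntegrable (fun u => r u j) volume a b := fun j =>
    (hcomp j).intervalIntegrable
  conv_lhs => rw [← M.updateRow_eq_self i]
  rw [det_updateRow_sum_basis]
  have : ∀ j, M i j * (M.updateRow i (Pi.single j 1)).det
      = ∫ u in a..b, r u j * (M.updateRow i (Pi.single j 1)).det := by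
    intro j
    rw [hM j, intervalIntegral.integral_mul_const]
  rw [Finset.sum_congr rfl fun j _ => this j,
    ← intervalIntegral.integral_finset_sum]
  · refine intervalIntegral.integral_congr fun u _ => ?_
    rw [det_updateRow_sum_basis]
  · intro j _
    exact (hint j).mul_const _

lemma my_integral_rpow {a b β : ℝ} (ha : 0 < a) (hβ : 0 < β) :
    ∫ u in a..b, β * u ^ (β - 1) = b ^ β - a ^ β := by
  rw [intervalIntegral.integral_const_mul, integral_rpow (Or.inl (by linarith))]
  have h1 : β - 1 + 1 = β := by ring
  rw [h1]
  field_simp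

end Helpers2

section IntLemma

variable {ι : Type*} [Fintype ι] [DecidableEq ι]

lemma det_integral_nonneg_and_pos (T : Finset ι) :
    ∀ (a b : ι → ℝ) (r : ι → ℝ → ι → ℝ) (M : Matrix ι ι ℝ),
    (∀ i ∈ T, a i ≤ b i) →
    (∀ i ∈ T, ContinuousOn (r i) (Set.uIcc (a i) (b i))) →
    (∀ i ∈ T, ∀ j, M i j = ∫ u in (a i)..(b i), r i u j) →
    (∀ u : ι → ℝ, (∀ i ∈ T, u i ∈ Set.Ioo (a i) (b i)) →
        0 < (Matrix.of fun i j => if i ∈ T then r i (u i) j else M i j).det) →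
    0 ≤ M.det ∧ ((∀ i ∈ T, a i < b i) → 0 < M.det) := by
  induction T using Finset.induction_on with
  | empty =>
      intro a b r M _ _ _ hpos
      have h := hpos (fun _ => 0) (by simp)
      have hEq : (Matrix.of fun i j =>
          if i ∈ (∅ : Finset ι) then r i 0 j else M i j) = M := by
        ext i j; simp
      rw [hEq] at h
      exact ⟨le_of_lt h, fun _ => h⟩
  | @insert i T hi ih =>
      intro a b r M hab hcont hM hpos
      have hmemi := Finset.mem_insert_self i T
      have key : M.det = ∫ u in (a i)..(b i), (M.updateRow i (r i u)).det :=
        det_row_intervalIntegral M i (a i) (b i) (r i) (hcont i hmemi) (hM i hmemi)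
      have hIH : ∀ u ∈ Set.Ioo (a i) (b i),
          0 ≤ (M.updateRow i (r i u)).det ∧
          ((∀ i' ∈ T, a i' < b i') → 0 < (M.updateRow i (r i u)).det) := by
        intro u hu
        refine ih a b r (M.updateRow i (r i u))
          (fun i' h => hab i' (Finset.mem_insert_of_mem h))
          (fun i' h => hcont i' (Finset.mem_insert_of_mem h)) ?_ ?_
        · intro i' hT j
          rw [Matrix.updateRow_ne (fun he : i' = i => hi (he ▸ hT))]
          exact hM i' (Finset.mem_insert_of_mem hT) j
        · intro w hw
          have hv : ∀ i'' ∈ insert i T,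
              (Function.update w i u) i'' ∈ Set.Ioo (a i'') (b i'') := by
            intro i'' hmem
            rcases Finset.mem_insert.mp hmem with h | h
            · subst h; rw [Function.update_self]; exact hu
            · rw [Function.update_of_ne (fun he : i'' = i => hi (he ▸ h))]; exact hw i'' h
          have hp := hpos _ hv
          have hMeq : (Matrix.of fun i' j =>
              if i' ∈ insert i T then r i' ((Function.update w i u) i') j else M i' j)
              = (Matrix.of fun i' j =>
              if i' ∈ T then r i' (w i') j else (M.updateRow i (r i u)) i' j) := by
            ext i' j
            by_cases hii : i' = i
            · subst hii
              simp only [Matrix.of_apply, Finset.mem_insert_self, if_true, hi, if_false,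
                Matrix.updateRow_self, Function.update_self]
            · simp only [Matrix.of_apply, Finset.mem_insert, hii, false_or,
                Matrix.updateRow_ne hii, Function.update_of_ne hii]
          rw [hMeq] at hp
          exact hp
      have hcd : ContinuousOn (fun u => (M.updateRow i (r i u)).det)
          (Set.uIcc (a i) (b i)) := by
        have hmat : ContinuousOn (fun u => M.updateRow i (r i u))
            (Set.uIcc (a i) (b i)) := by
          refine continuousOn_pi.mpr fun i' => continuousOn_pi.mpr fun j => ?_
          by_cases hii : i' = i
          · simp only [hii, Matrix.updateRow_self]
            exact (continuousOn_pi.mp (hcont i hmemi)) j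
          · simp only [Matrix.updateRow_ne hii]
            exact continuousOn_const
        exact (continuous_id.matrix_det).comp_continuousOn hmat
      constructor
      · rw [key]
        exact my_integral_nonneg_Ioo (hab i hmemi) (fun u hu => (hIH u hu).1)
      · intro hstrict
        rw [key]
        refine intervalIntegral_pos_of_pos_on hcd.intervalIntegrable
          (fun u hu => (hIH u hu).2
            (fun i' h => hstrict i' (Finset.mem_insert_of_mem h)))
          (hstrict i hmemi)

end IntLemma

theorem gv_aux (N : ℕ) :
    ∀ (α s t : Fin (N + 1) → ℝ), StrictMono α →
    (∀ j : Fin (N + 1), j ≠ 0 → s j = -1 ∨ s j = 1) →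
    (∀ i, 0 < t i) →
    (∀ i : Fin N, s i.succ = -1 → t i.castSucc ≤ t i.succ) →
    (∀ i : Fin N, s i.succ = 1 → t i.castSucc < t i.succ) →
    0 < (Matrix.of fun i j : Fin (N + 1) =>
        (if (i : ℕ) < (j : ℕ) then s j else 1) * t i ^ α j).det := by
  induction N using Nat.strong_induction_on with
  | _ N IH =>
  obtain _ | n := N
  · intro α s t hα hs ht h1 h2
    rw [Matrix.det_fin_one]
    simp only [Matrix.of_apply, Fin.val_zero, lt_self_iff_false, if_false, one_mul]
    exact Real.rpow_pos_of_pos (ht 0) _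
  intro α s t hα hs ht hchain₁ hchain₂
  have hmono : Monotone t := Fin.monotone_iff_le_succ.mpr (fun i => by
    rcases hs i.succ (Fin.succ_ne_zero i) with h | h
    · exact hchain₁ i h
    · exact (hchain₂ i h).le)
  set β : Fin (n + 2) → ℝ := fun j => α j - α 0 with hβdef
  have hβpos : ∀ j : Fin (n + 2), j ≠ 0 → 0 < β j := fun j hj =>
    sub_pos.mpr (hα (Fin.pos_of_ne_zero hj))
  have hβ0 : β 0 = 0 := by simp [hβdef]
  set W' : Matrix (Fin (n + 2)) (Fin (n + 2)) ℝ :=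
    Matrix.of fun i j => (if (i : ℕ) < (j : ℕ) then s j else 1) * t i ^ β j with hW'def
  have step1 : (Matrix.of fun i j : Fin (n + 2) =>
      (if (i : ℕ) < (j : ℕ) then s j else 1) * t i ^ α j).det
      = (∏ i, t i ^ α 0) * W'.det := by
    have key : ∀ i j : Fin (n + 2), t i ^ α j = t i ^ α 0 * t i ^ (α j - α 0) := by
      intro i j
      rw [← Real.rpow_add (ht i)]
      congr 1
      ring
    rw [hW'def, ← Matrix.det_mul_column (fun i => t i ^ α 0)]
    congr 1
    ext i j
    simp only [Matrix.of_apply, hβdef]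
    rw [key i j]
    ring
  set B : Matrix (Fin (n + 2)) (Fin (n + 2)) ℝ :=
    Matrix.of fun i j => if i = 0 then W' i j else W' i j - W' (i - 1) j with hBdef
  have step2 : W'.det = B.det := by
    refine Matrix.det_eq_of_forall_row_eq_smul_add_pred (fun _ => (1 : ℝ)) (fun j => ?_)
      (fun i j => ?_)
    · simp [hBdef]
    · have h1 : (i.succ : Fin (n + 2)) ≠ 0 := Fin.succ_ne_zero i
      have h2 : (i.succ : Fin (n + 2)) - 1 = i.castSucc := by
        apply Fin.ext
        rw [Fin.coe_sub_one, if_neg h1]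
        simp
      simp only [hBdef, Matrix.of_apply, if_neg h1, h2]
      ring
  set D : Matrix (Fin (n + 1)) (Fin (n + 1)) ℝ := B.submatrix Fin.succ Fin.succ with hDdef
  have step3 : B.det = D.det := by
    have hcol : ∀ i : Fin (n + 2), i ≠ 0 → B i 0 = 0 := by
      intro i hi
      have hW0 : ∀ k : Fin (n + 2), W' k 0 = 1 := by
        intro k
        simp [hW'def, hβ0, Real.rpow_zero]
      simp [hBdef, if_neg hi, hW0]
    have hB00 : B 0 0 = 1 := by
      simp [hBdef, hW'def, hβ0, Real.rpow_zero]
    rw [Matrix.det_succ_column_zero]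
    rw [Finset.sum_eq_single (0 : Fin (n + 2))]
    · rw [hB00]
      simp [hDdef, Fin.succAbove_zero]
    · intro i _ hi; rw [hcol i hi]; ring
    · intro h; exact absurd (Finset.mem_univ _) h
  set cb : Fin (n + 1) → ℝ :=
    fun i => if s i.succ = -1 then 2 * t i.castSucc ^ β i.succ else 0 with hcbdef
  set Bv : Fin (n + 1) → Fin (n + 1) → ℝ :=
    fun i => cb i • (Pi.single i (1 : ℝ) : Fin (n + 1) → ℝ) with hBvdef
  set Av : Fin (n + 1) → Fin (n + 1) → ℝ := fun i j =>
    (if (i : ℕ) < (j : ℕ) then s j.succ else 1) *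
      (t i.succ ^ β j.succ - t i.castSucc ^ β j.succ) with hAvdef
  have step4 : D = Matrix.of (Bv + Av) := by
    ext i j
    have hsub : (i.succ : Fin (n + 2)) - 1 = i.castSucc := by
      apply Fin.ext
      rw [Fin.coe_sub_one, if_neg (Fin.succ_ne_zero i)]
      simp
    have hD : D i j = W' i.succ j.succ - W' i.castSucc j.succ := by
      simp only [hDdef, Matrix.submatrix_apply, hBdef, Matrix.of_apply,
        if_neg (Fin.succ_ne_zero i), hsub]
    have hc1 : ((i.succ : Fin (n + 2)) : ℕ) < ((j.succ : Fin (n + 2)) : ℕ) ↔ (i : ℕ) < (j : ℕ) := by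
      simp
    have hc2 : ((i.castSucc : Fin (n + 2)) : ℕ) < ((j.succ : Fin (n + 2)) : ℕ) ↔ (i : ℕ) ≤ (j : ℕ) := by
      simp only [Fin.coe_castSucc, Fin.val_succ]
      omega
    rw [hD]
    simp only [hW'def, Matrix.of_apply, Pi.add_apply, hBvdef, hAvdef, Pi.smul_apply,
      smul_eq_mul]
    rcases lt_trichotomy (i : ℕ) (j : ℕ) with h | h | h
    · have hne : j ≠ i := fun he => by rw [he] at h; exact lt_irrefl _ h
      rw [if_pos (hc1.mpr h), if_pos (hc2.mpr h.le), if_pos h, Pi.single_eq_of_ne hne]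
      ring
    · have heq : i = j := Fin.ext h
      subst heq
      rw [if_neg (by rw [hc1]; exact lt_irrefl _), if_pos (hc2.mpr le_rfl),
        if_neg (lt_irrefl _), Pi.single_eq_same]
      rcases hs i.succ (Fin.succ_ne_zero i) with hsv | hsv
      · rw [hsv]
        simp only [hcbdef]
        rw [if_pos hsv]
        ring
      · rw [hsv]
        simp only [hcbdef]
        rw [if_neg (by rw [hsv]; norm_num)]
        ring
    · have hne : j ≠ i := fun he => by rw [he] at h; exact lt_irrefl _ h
      rw [if_neg (by rw [hc1]; omega), if_neg (by rw [hc2]; omega), if_neg (by omega),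
        Pi.single_eq_of_ne hne]
      ring
  have step5 : D.det = ∑ S : Finset (Fin (n + 1)), (Matrix.of (S.piecewise Bv Av)).det := by
    rw [step4]
    calc (Matrix.of (Bv + Av)).det
        = Matrix.detRowAlternating (Bv + Av) := rfl
      _ = ∑ S : Finset (Fin (n + 1)), Matrix.detRowAlternating (S.piecewise Bv Av) :=
          (Matrix.detRowAlternating).toMultilinearMap.map_add_univ Bv Av
      _ = ∑ S : Finset (Fin (n + 1)), (Matrix.of (S.piecewise Bv Av)).det := rfl
  have hblock : ∀ S : Finset (Fin (n + 1)), (∀ i ∈ S, s i.succ = -1) →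
      0 ≤ (Matrix.of (S.piecewise Bv Av)).det ∧
      ((∀ i : Fin (n + 1), i ∉ S → s i.succ = 1) →
        0 < (Matrix.of (S.piecewise Bv Av)).det) := by
    intro S hSneg
    set G : Matrix (Fin (n + 1)) (Fin (n + 1)) ℝ := Matrix.of (S.piecewise Bv Av) with hGdef
    have hGmem : ∀ (i : Fin (n + 1)), i ∈ S → ∀ j, G i j = cb i * (Pi.single i (1:ℝ) : Fin (n + 1) → ℝ) j := by
      intro i hi j
      rw [hGdef]
      show (S.piecewise Bv Av) i j = _
      rw [Finset.piecewise_eq_of_mem _ _ _ hi, hBvdef]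
      simp
    have hGnmem : ∀ (i : Fin (n + 1)), i ∉ S → ∀ j, G i j = Av i j := by
      intro i hi j
      rw [hGdef]
      show (S.piecewise Bv Av) i j = _
      rw [Finset.piecewise_eq_of_notMem _ _ _ hi]
    have htri : G.det = (Matrix.toSquareBlockProp G (fun i => i ∉ S)).det *
        (Matrix.toSquareBlockProp G (fun i => ¬ i ∉ S)).det := by
      apply Matrix.twoBlockTriangular_det
      intro i hi j hj
      have hiS : i ∈ S := not_not.mp hi
      have hji : j ≠ i := fun he => hj (he ▸ hiS)
      rw [hGmem i hiS j, Pi.single_eq_of_ne hji, mul_zero]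
    have hdiagpos : 0 < (Matrix.toSquareBlockProp G (fun i => ¬ i ∉ S)).det := by
      have hdiag : (Matrix.toSquareBlockProp G (fun i => ¬ i ∉ S)) =
          Matrix.diagonal (fun i : {a : Fin (n + 1) // ¬ a ∉ S} => cb i.1) := by
        ext i j
        rw [Matrix.toSquareBlockProp_def]
        simp only [Matrix.of_apply]
        rw [hGmem i.1 (not_not.mp i.2) j.1]
        by_cases hij : j = i
        · subst hij
          rw [Pi.single_eq_same, Matrix.diagonal_apply_eq]
          ring
        · rw [Pi.single_eq_of_ne (fun he => hij (Subtype.ext he)), mul_zero,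
            Matrix.diagonal_apply_ne _ (fun he => hij (he.symm))]
      rw [hdiag, Matrix.det_diagonal]
      apply Finset.prod_pos
      intro i _
      have hiS : i.1 ∈ S := not_not.mp i.2
      simp only [hcbdef, if_pos (hSneg i.1 hiS)]
      have := Real.rpow_pos_of_pos (ht i.1.castSucc) (β i.1.succ)
      linarith
    set H := Matrix.toSquareBlockProp G (fun i => i ∉ S) with hHdef
    set av : {a : Fin (n + 1) // a ∉ S} → ℝ := fun i => t i.1.castSucc with havdef
    set bv : {a : Fin (n + 1) // a ∉ S} → ℝ := fun i => t i.1.succ with hbvdef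
    set rv : {a : Fin (n + 1) // a ∉ S} → ℝ → {a : Fin (n + 1) // a ∉ S} → ℝ :=
      fun i u j => (if (i.1 : ℕ) < (j.1 : ℕ) then s j.1.succ else 1) *
        (β j.1.succ * u ^ (β j.1.succ - 1)) with hrvdef
    have hκab : ∀ i, av i ≤ bv i := fun i => hmono (Fin.castSucc_lt_succ : i.1.castSucc < i.1.succ).le
    have h0av : ∀ i, 0 < av i := fun i => ht _
    have hcont : ∀ i, ContinuousOn (rv i) (Set.uIcc (av i) (bv i)) := by
      intro i
      refine continuousOn_pi.mpr fun j => ?_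
      have hpow : ContinuousOn (fun u : ℝ => u ^ (β j.1.succ - 1))
          (Set.uIcc (av i) (bv i)) := by
        apply ContinuousOn.rpow_const continuousOn_id
        intro x hx
        left
        rw [Set.uIcc_of_le (hκab i)] at hx
        exact ne_of_gt (lt_of_lt_of_le (h0av i) hx.1)
      exact continuousOn_const.mul (continuousOn_const.mul hpow)
    have hHint : ∀ i j, H i j = ∫ u in (av i)..(bv i), rv i u j := by
      intro i j
      have hH1 : H i j = Av i.1 j.1 := by
        rw [hHdef, Matrix.toSquareBlockProp_def]
        simp only [Matrix.of_apply]
        exact hGnmem i.1 i.2 j.1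
      have hH2 : (∫ u in (av i)..(bv i), rv i u j)
          = (if (i.1 : ℕ) < (j.1 : ℕ) then s j.1.succ else 1) *
            ∫ u in (av i)..(bv i), β j.1.succ * u ^ (β j.1.succ - 1) := by
        rw [← intervalIntegral.integral_const_mul]
      rw [hH1, hH2, my_integral_rpow (h0av i) (hβpos _ (Fin.succ_ne_zero _)), hAvdef]
    have hpoint : ∀ u : {a : Fin (n + 1) // a ∉ S} → ℝ, (∀ i, u i ∈ Set.Ioo (av i) (bv i)) →
        0 < (Matrix.of fun i j => rv i (u i) j).det := by
      intro u hu
      have humono : ∀ {x y : {a : Fin (n + 1) // a ∉ S}}, x < y → u x < u y := by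
        intro x y hxy
        have h1 : u x < t x.1.succ := (hu x).2
        have h2 : t y.1.castSucc < u y := (hu y).1
        have h3 : t x.1.succ ≤ t y.1.castSucc := by
          apply hmono
          rw [Fin.le_def]
          simp only [Fin.val_succ, Fin.coe_castSucc]
          have : (x.1 : ℕ) < (y.1 : ℕ) := hxy
          omega
        linarith
      have hupos : ∀ x, 0 < u x := fun x => lt_trans (h0av x) (hu x).1
      have hfac : (Matrix.of fun i j => rv i (u i) j) =
          Matrix.of (fun i j => β j.1.succ *
            ((Matrix.of fun i j : {a : Fin (n + 1) // a ∉ S} =>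
              (if (i.1 : ℕ) < (j.1 : ℕ) then s j.1.succ else 1) *
                u i ^ (β j.1.succ - 1)) i j)) := by
        ext i j
        simp only [Matrix.of_apply, hrvdef]
        ring
      rw [hfac, Matrix.det_mul_row]
      apply mul_pos
      · exact Finset.prod_pos fun j _ => hβpos _ (Fin.succ_ne_zero _)
      set Q := Matrix.of fun i j : {a : Fin (n + 1) // a ∉ S} =>
        (if (i.1 : ℕ) < (j.1 : ℕ) then s j.1.succ else 1) * u i ^ (β j.1.succ - 1) with hQdef
      rcases hcard : Fintype.card {a : Fin (n + 1) // a ∉ S} with _ | m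
      · haveI : IsEmpty {a : Fin (n + 1) // a ∉ S} := Fintype.card_eq_zero_iff.mp hcard
        rw [Matrix.det_isEmpty]
        exact one_pos
      · have hmlt : m < n + 1 := by
          have hle := Fintype.card_subtype_le (fun a : Fin (n + 1) => a ∉ S)
          rw [hcard, Fintype.card_fin] at hle
          omega
        set e := Fintype.orderIsoFinOfCardEq {a : Fin (n + 1) // a ∉ S} hcard with hedef
        have heiff : ∀ a b : Fin (m + 1), (((e a).1 : ℕ) < ((e b).1 : ℕ)) ↔ ((a:ℕ) < (b:ℕ)) := by
          intro a b
          exact ⟨fun h => e.lt_iff_lt.mp h, fun h => e.lt_iff_lt.mpr h⟩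
        rw [← Matrix.det_submatrix_equiv_self e.toEquiv Q]
        have hform : Q.submatrix e.toEquiv e.toEquiv =
            Matrix.of fun a b : Fin (m + 1) =>
              (if (a : ℕ) < (b : ℕ) then (fun b' : Fin (m+1) => s (e b').1.succ) b else 1) *
                (fun a' : Fin (m+1) => u (e a')) a ^
                  ((fun b' : Fin (m+1) => β (e b').1.succ - 1) b) := by
          ext a b
          simp only [Matrix.submatrix_apply, hQdef, Matrix.of_apply, Equiv.coe_fn_mk]
          congr 1
          exact if_congr (heiff a b) rfl rfl
        rw [hform]
        refine IH m hmlt _ _ _ ?_ ?_ ?_ ?_ ?_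
        · intro a b hab
          have h1 : (e a).1 < (e b).1 := e.lt_iff_lt.mpr hab
          have h2 : (e a).1.succ < (e b).1.succ := Fin.succ_lt_succ_iff.mpr h1
          have h3 := hα h2
          simp only [hβdef]
          linarith
        · intro b _
          exact hs (e b).1.succ (Fin.succ_ne_zero _)
        · intro a
          exact hupos (e a)
        · intro i _
          exact (humono (e.lt_iff_lt.mpr (Fin.castSucc_lt_succ : i.castSucc < i.succ))).le
        · intro i _
          exact humono (e.lt_iff_lt.mpr (Fin.castSucc_lt_succ : i.castSucc < i.succ))
    obtain ⟨hH0, hHstrict⟩ := det_integral_nonneg_and_pos Finset.univ av bv rv H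
      (fun i _ => hκab i) (fun i _ => hcont i) (fun i _ j => hHint i j)
      (fun u hu => by
        have hp := hpoint u (fun i => hu i (Finset.mem_univ i))
        have heq : (Matrix.of fun i j => if i ∈ Finset.univ then rv i (u i) j else H i j)
            = (Matrix.of fun i j => rv i (u i) j) := by
          ext i j
          simp
        rw [heq]
        exact hp)
    refine ⟨?_, ?_⟩
    · rw [htri]
      exact mul_nonneg hH0 hdiagpos.le
    · intro hcomp
      rw [htri]
      refine mul_pos (hHstrict fun i _ => ?_) hdiagpos
      exact hchain₂ i.1 (hcomp i.1 i.2)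
  have hterm_nonneg : ∀ S : Finset (Fin (n + 1)),
      0 ≤ (Matrix.of (S.piecewise Bv Av)).det := by
    intro S
    by_cases hS : ∀ i ∈ S, s i.succ = -1
    · exact (hblock S hS).1
    · push_neg at hS
      obtain ⟨i, hiS, hine⟩ := hS
      have hs1 : s i.succ = 1 := (hs i.succ (Fin.succ_ne_zero i)).resolve_left hine
      have hrow : ∀ j, (Matrix.of (S.piecewise Bv Av)) i j = 0 := by
        intro j
        have : S.piecewise Bv Av i = Bv i := Finset.piecewise_eq_of_mem _ _ _ hiS
        rw [Matrix.of_apply, this]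
        simp only [Matrix.of_apply, this, hBvdef, hcbdef, hs1, Pi.smul_apply, smul_eq_mul]
        norm_num
      rw [Matrix.det_eq_zero_of_row_eq_zero i hrow]
  set Neg : Finset (Fin (n + 1)) := Finset.univ.filter (fun i => s i.succ = -1) with hNegdef
  have hterm_pos : 0 < (Matrix.of (Neg.piecewise Bv Av)).det := by
    refine (hblock Neg (fun i hi => (Finset.mem_filter.mp hi).2)).2 (fun i hi => ?_)
    have : ¬ s i.succ = -1 := fun h => hi (Finset.mem_filter.mpr ⟨Finset.mem_univ _, h⟩)
    exact (hs i.succ (Fin.succ_ne_zero i)).resolve_left this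
  have hsum : 0 < ∑ S : Finset (Fin (n + 1)), (Matrix.of (S.piecewise Bv Av)).det :=
    Finset.sum_pos' (fun S _ => hterm_nonneg S) ⟨Neg, Finset.mem_univ _, hterm_pos⟩
  rw [step1, step2, step3, step5]
  exact mul_pos (Finset.prod_pos (fun i _ => Real.rpow_pos_of_pos (ht i) _)) hsum

/-- The generalized Vandermonde determinant `det (W(t; α))` is strictly
positive, where the `(i,j)` entry of `W(t; α)` is `s j * t i ^ α j` when `j > i` and
`t i ^ α j` when `j ≤ i`, under the hypotheses that `n ≥ 1`, `α` is strictly increasing,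
each `s j` (for `j ≠ 0`) is `-1` or `1`, all `t i` are positive, and the `t i` form a
chain which is weakly increasing at step `i` when `s (i+1) = -1` and strictly increasing
at step `i` when `s (i+1) = 1`. Powers are real powers (`Real.rpow`). -/
theorem generalized_vandermonde_det_pos
    (n : ℕ) (hn : 1 ≤ n)
    (α : Fin (n + 1) → ℝ) (hα : StrictMono α)
    (s : Fin (n + 1) → ℝ) (hs : ∀ j : Fin (n + 1), j ≠ 0 → s j = -1 ∨ s j = 1)
    (t : Fin (n + 1) → ℝ) (ht : ∀ i, 0 < t i)
    (hchain₁ : ∀ i : Fin n, s i.succ = -1 → t i.castSucc ≤ t i.succ)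
    (hchain₂ : ∀ i : Fin n, s i.succ = 1 → t i.castSucc < t i.succ) :
    0 < (Matrix.of fun i j : Fin (n + 1) =>
        (if (i : ℕ) < (j : ℕ) then s j else 1) * t i ^ α j).det := by
  exact gv_aux n α s t hα hs ht hchain₁ hchain₂
end

section
/- Let 0 < x_0 < x_1 < ⋯ < x_n be real numbers and let k_0 < k_1 < ⋯ < k_n be real numbers. Then the (n+1)×(n+1) matrix whose (i,j) entry is x_i^{k_j} is strictly totally positive; that is, every minor of this matrix (the determinant of any square submatrix obtained by selecting rows i_1 < ⋯ < i_m and columns j_1 < ⋯ < j_m) is strictly positive. -/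
/-!
A square submatrix of `(x i ^ k j)` is again of this form, so it suffices to show
`det (x i ^ k j) > 0` for `0 < x 0 < ⋯ < x (m-1)` and `k 0 < ⋯ < k (m-1)`.
The determinant does not vanish: a kernel vector `c` would give a generalized polynomial
`∑ⱼ cⱼ tᵏʲ` with `m` positive zeros, and dividing by `tᵏ⁰` and applying Rolle's theorem
produces one with `m - 1` terms and `m - 1` positive zeros, so `c = 0` by induction.
As a function of `k` the determinant is continuous on the convex set of increasing
exponent vectors, hence has constant sign there, and at `k = (0, 1, …, m-1)` it is a
Vandermonde determinant, which is positive.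
-/

/-- A real matrix is strictly totally positive if every minor (determinant of the
submatrix obtained by selecting rows `r 0 < r 1 < ⋯` and columns `c 0 < c 1 < ⋯`)
is strictly positive. -/
def IsStrictlyTotallyPositive {N M : ℕ} (A : Matrix (Fin N) (Fin M) ℝ) : Prop :=
  ∀ (k : ℕ) (r : Fin k → Fin N) (c : Fin k → Fin M),
    StrictMono r → StrictMono c → 0 < (A.submatrix r c).det

open Finset Set

theorem convex_setOf_strictMono {ι : Type*} [Preorder ι] :
    Convex ℝ {k : ι → ℝ | StrictMono k} := by
  intro k hk k' hk' a b ha hb hab i j hij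
  simp only [Pi.add_apply, Pi.smul_apply, smul_eq_mul]
  rcases ha.eq_or_lt with rfl | ha
  · obtain rfl : b = 1 := by linarith
    simpa using hk' hij
  · nlinarith [mul_lt_mul_of_pos_left (hk hij) ha, mul_le_mul_of_nonneg_left (hk' hij).le hb]

theorem Matrix.det_vandermonde_pos {R : Type*} [CommRing R] [LinearOrder R] [IsStrictOrderedRing R]
    {n : ℕ} {v : Fin n → R} (hv : StrictMono v) : 0 < (Matrix.vandermonde v).det := by
  rw [Matrix.det_vandermonde]
  exact prod_pos fun i _ => prod_pos fun j hj => sub_pos.2 (hv (mem_Ioi.1 hj))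

theorem exists_strictMono_deriv_eq_zero {m : ℕ} {f : ℝ → ℝ} {x : Fin (m + 1) → ℝ}
    (hx : StrictMono x) (hf : ContinuousOn f (Icc (x 0) (x (Fin.last m))))
    (hfx : ∀ i, f (x i) = 0) :
    ∃ ξ : Fin m → ℝ, StrictMono ξ ∧ (∀ i, ξ i ∈ Ioo (x i.castSucc) (x i.succ)) ∧
      ∀ i, deriv f (ξ i) = 0 := by
  have rolle : ∀ i : Fin m, ∃ ξ ∈ Ioo (x i.castSucc) (x i.succ), deriv f ξ = 0 := fun i =>
    exists_deriv_eq_zero (hx i.castSucc_lt_succ)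
      (hf.mono (Icc_subset_Icc (hx.monotone (Fin.zero_le _)) (hx.monotone (Fin.le_last _))))
      (by rw [hfx, hfx])
  choose ξ hξ hξf using rolle
  refine ⟨ξ, fun i j hij => ?_, hξ, hξf⟩
  calc ξ i < x i.succ := (hξ i).2
    _ ≤ x j.castSucc := hx.monotone (Fin.succ_le_castSucc_iff.2 hij)
    _ < ξ j := (hξ j).1

noncomputable def rpowPoly {ι : Type*} [Fintype ι] (c k : ι → ℝ) (t : ℝ) : ℝ :=
  ∑ j, c j * t ^ k j

section rpowPoly

variable {ι : Type*} [Fintype ι] (c k : ι → ℝ) {t : ℝ}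

theorem rpowPoly_div_rpow (ht : 0 < t) (a : ℝ) :
    rpowPoly c k t / t ^ a = rpowPoly c (fun j => k j - a) t := by
  simp only [rpowPoly, sum_div, Real.rpow_sub ht, mul_div_assoc]

theorem hasDerivAt_rpowPoly (ht : 0 < t) :
    HasDerivAt (rpowPoly c k) (rpowPoly (fun j => c j * k j) (fun j => k j - 1) t) t := by
  unfold rpowPoly
  simp only [mul_assoc]
  exact HasDerivAt.fun_sum fun j _ => (Real.hasDerivAt_rpow_const (Or.inl ht.ne')).const_mul (c j)

theorem continuousOn_rpowPoly : ContinuousOn (rpowPoly c k) (Ioi 0) := fun _ ht =>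
  (hasDerivAt_rpowPoly c k ht).continuousAt.continuousWithinAt

end rpowPoly

theorem rpowPoly_fin_succ {m : ℕ} (c k : Fin (m + 1) → ℝ) (t : ℝ) :
    rpowPoly c k t = c 0 * t ^ k 0 + rpowPoly (fun j : Fin m => c j.succ) (fun j => k j.succ) t :=
  Fin.sum_univ_succ _

theorem eq_zero_of_rpowPoly_eq_zero {m : ℕ} {c k x : Fin m → ℝ} (hk : StrictMono k)
    (hx : StrictMono x) (hx0 : ∀ i, 0 < x i) (hc : ∀ i, rpowPoly c k (x i) = 0) : c = 0 := by
  induction m with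
  | zero => exact Subsingleton.elim _ _
  | succ m ih =>
    have hg : ∀ i, rpowPoly c (fun j => k j - k 0) (x i) = 0 := fun i => by
      rw [← rpowPoly_div_rpow c k (hx0 i), hc i, zero_div]
    obtain ⟨ξ, hξ, hξx, hg'ξ⟩ := exists_strictMono_deriv_eq_zero hx
      ((continuousOn_rpowPoly _ _).mono fun t ht => (hx0 0).trans_le ht.1) hg
    have hξ0 : ∀ i, 0 < ξ i := fun i => (hx0 _).trans (hξx i).1
    -- the derivative has a zero coefficient at `j = 0`, leaving `m` terms vanishing at `ξ`
    have htail : (fun j : Fin m => c j.succ * (k j.succ - k 0)) = 0 := by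
      refine ih (k := fun j => k j.succ - k 0 - 1)
        (fun i j hij => by simpa using hk (Fin.succ_lt_succ_iff.2 hij)) hξ hξ0 fun i => ?_
      have hderiv := (hasDerivAt_rpowPoly c (fun j => k j - k 0) (hξ0 i)).deriv
      rw [hg'ξ i, rpowPoly_fin_succ] at hderiv
      simpa using hderiv.symm
    have hc_succ : ∀ j : Fin m, c j.succ = 0 := fun j =>
      (mul_eq_zero.1 (congrFun htail j)).resolve_right (sub_pos.2 (hk (Fin.succ_pos j))).ne'
    have hc0 : c 0 = 0 := by
      have h := hc 0
      rw [rpowPoly_fin_succ, show (fun j : Fin m => c j.succ) = 0 from funext hc_succ] at h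
      simp only [rpowPoly, Pi.zero_apply, zero_mul, sum_const_zero, add_zero] at h
      exact (mul_eq_zero.1 h).resolve_right (Real.rpow_pos_of_pos (hx0 0) _).ne'
    ext j
    cases j using Fin.cases with
    | zero => exact hc0
    | succ j => exact hc_succ j

theorem rpow_matrix_mulVec {m : ℕ} (x k c : Fin m → ℝ) :
    (Matrix.of fun i j => x i ^ k j).mulVec c = fun i => rpowPoly c k (x i) := by
  ext i
  simp only [Matrix.mulVec, dotProduct, Matrix.of_apply, rpowPoly, mul_comm]

theorem det_rpow_matrix_ne_zero {m : ℕ} {x k : Fin m → ℝ} (hx : StrictMono x)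
    (hx0 : ∀ i, 0 < x i) (hk : StrictMono k) : (Matrix.of fun i j => x i ^ k j).det ≠ 0 := by
  intro hdet
  obtain ⟨c, hc, hMc⟩ := Matrix.exists_mulVec_eq_zero_iff.2 hdet
  rw [rpow_matrix_mulVec] at hMc
  exact hc (eq_zero_of_rpowPoly_eq_zero hk hx hx0 (congrFun hMc))

theorem continuous_det_rpow_matrix {m : ℕ} {x : Fin m → ℝ} (hx0 : ∀ i, 0 < x i) :
    Continuous fun k : Fin m → ℝ => (Matrix.of fun i j => x i ^ k j).det :=
  (continuous_matrix fun i j => (Real.continuous_const_rpow (hx0 i).ne').comp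
    (continuous_apply j)).matrix_det

theorem det_rpow_matrix_pos {m : ℕ} {x k : Fin m → ℝ} (hx : StrictMono x)
    (hx0 : ∀ i, 0 < x i) (hk : StrictMono k) : 0 < (Matrix.of fun i j => x i ^ k j).det := by
  refine convex_setOf_strictMono.isPreconnected.lt_of_ne
    (continuous_det_rpow_matrix hx0).continuousOn
    (fun k' hk' => det_rpow_matrix_ne_zero hx hx0 hk') ⟨fun j => (j : ℕ), ?_, ?_⟩ hk
  · exact Nat.strictMono_cast.comp Fin.val_strictMono
  · convert Matrix.det_vandermonde_pos hx using 2
    ext i j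
    simp [Matrix.vandermonde_apply]

/-- If `0 < x 0 < x 1 < ⋯ < x n` and `k 0 < k 1 < ⋯ < k n` are real
numbers, then the matrix with `(i,j)` entry `x i ^ k j` (real power) is strictly
totally positive. -/
theorem rpow_matrix_strictly_totally_positive
    (n : ℕ) (x k : Fin (n + 1) → ℝ)
    (hx0 : 0 < x 0) (hx : StrictMono x) (hk : StrictMono k) :
    IsStrictlyTotallyPositive (Matrix.of fun i j : Fin (n + 1) => x i ^ k j) := by
  intro m r c hr hc
  exact det_rpow_matrix_pos (hx.comp hr)
    (fun i => hx0.trans_le (hx.monotone (Fin.zero_le _))) (hk.comp hc)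
end

section
/- Let a_0 ≤ a_1 ≤ ⋯ ≤ a_n be real numbers with a_0 < a_n, let c_{a_0}, …, c_{a_n} > 0, let l > 0, and let β_{a_i}(t) = c_{a_i} (l(t − a_0))^{l(a_i − a_0)} (l(a_n − t))^{l(a_n − a_i)} be the GT-Bernstein basis functions. Let a_0 < t_0 < t_1 < ⋯ < t_n < a_n be an increasing sequence, set x_i = (t_i − a_0)/(a_n − t_i) and k_i = a_i − a_0 for i = 0, 1, …, n, and let B = [β_{a_j}(t_i)]_{i,j=0}^{n} be the collocation matrix and A = [x_i^{l·k_j}]_{i,j=0}^{n}. Then B is a totally positive matrix if and only if A is a totally positive matrix. -/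
/-- A real matrix is totally positive if every minor (determinant of the submatrix
obtained by selecting rows `r 0 < r 1 < ⋯` and columns `c 0 < c 1 < ⋯`) is
nonnegative. -/
def IsTotallyPositive {N M : ℕ} (A : Matrix (Fin N) (Fin M) ℝ) : Prop :=
  ∀ (k : ℕ) (r : Fin k → Fin N) (c : Fin k → Fin M),
    StrictMono r → StrictMono c → 0 ≤ (A.submatrix r c).det

/-- The GT-Bernstein basis functions
`β_{a_i}(t) = c_{a_i} (l(t − a_0))^{l(a_i − a_0)} (l(a_n − t))^{l(a_n − a_i)}`,
where powers are real powers (`Real.rpow`, which satisfies `0 ^ 0 = 1`). -/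
noncomputable def gtBernstein (n : ℕ) (a c : Fin (n + 1) → ℝ) (l : ℝ)
    (i : Fin (n + 1)) (t : ℝ) : ℝ :=
  c i * (l * (t - a 0)) ^ (l * (a i - a 0)) *
    (l * (a (Fin.last n) - t)) ^ (l * (a (Fin.last n) - a i))

/-! Writing `x = (t - a₀)/(aₙ - t)`, one has `l(t - a₀) = x · l(aₙ - t)`, so
`β_{a_j}(t) = (l(aₙ - t))^{l(aₙ - a₀)} · c_j · x^{l(a_j - a₀)}`: the collocation matrix `B` is
`A` with its rows and columns scaled by positive numbers. Such a scaling multiplies every minor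
by a positive factor, hence preserves total positivity in both directions. -/

open Matrix

lemma det_submatrix_of_mul_mul {m n ι R : Type*} [Fintype ι] [DecidableEq ι] [CommRing R]
    (d : m → R) (e : n → R) (A : Matrix m n R) (r : ι → m) (c : ι → n) :
    ((of fun i j => d i * e j * A i j).submatrix r c).det
      = ((∏ i, d (r i)) * ∏ i, e (c i)) * (A.submatrix r c).det := by
  have hscale : (of fun i j => d i * e j * A i j).submatrix r c
      = of fun i j => d (r i) * (of fun i j => e (c j) * A.submatrix r c i j) i j := by
    ext i j
    simp only [submatrix_apply, of_apply]
    ring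
  rw [hscale, det_mul_column, det_mul_row, mul_assoc]

lemma isTotallyPositive_of_mul_mul_iff {N M : ℕ} {d : Fin N → ℝ} {e : Fin M → ℝ}
    (hd : ∀ i, 0 < d i) (he : ∀ j, 0 < e j) (A : Matrix (Fin N) (Fin M) ℝ) :
    IsTotallyPositive (of fun i j => d i * e j * A i j) ↔ IsTotallyPositive A := by
  refine forall₄_congr fun k r c _ => imp_congr_right fun _ => ?_
  rw [det_submatrix_of_mul_mul]
  exact mul_nonneg_iff_of_pos_left
    (mul_pos (Finset.prod_pos fun i _ => hd (r i)) (Finset.prod_pos fun i _ => he (c i)))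

lemma gtBernstein_eq_mul_rpow {n : ℕ} (a c : Fin (n + 1) → ℝ) {l t : ℝ} (hl : 0 < l)
    (ht0 : a 0 < t) (htn : t < a (Fin.last n)) (j : Fin (n + 1)) :
    gtBernstein n a c l j t
      = (l * (a (Fin.last n) - t)) ^ (l * (a (Fin.last n) - a 0)) * c j *
          ((t - a 0) / (a (Fin.last n) - t)) ^ (l * (a j - a 0)) := by
  have hpos : 0 < a (Fin.last n) - t := sub_pos.2 htn
  have hx : 0 ≤ (t - a 0) / (a (Fin.last n) - t) := (div_pos (sub_pos.2 ht0) hpos).le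
  have hfactor :
      l * (t - a 0) = (t - a 0) / (a (Fin.last n) - t) * (l * (a (Fin.last n) - t)) := by
    field_simp
  have hexp : l * (a (Fin.last n) - a 0) = l * (a j - a 0) + l * (a (Fin.last n) - a j) := by
    ring
  rw [gtBernstein, hfactor, Real.mul_rpow hx (by positivity), hexp,
    Real.rpow_add (by positivity)]
  ring

theorem gtBernstein_collocation_TP_iff_general
    (n : ℕ) (a c : Fin (n + 1) → ℝ) (l : ℝ)
    (hc : ∀ i, 0 < c i) (hl : 0 < l)
    (t : Fin (n + 1) → ℝ) (ht : StrictMono t)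
    (ht0 : a 0 < t 0) (htn : t (Fin.last n) < a (Fin.last n)) :
    IsTotallyPositive
        (Matrix.of fun i j : Fin (n + 1) => gtBernstein n a c l j (t i)) ↔
      IsTotallyPositive
        (Matrix.of fun i j : Fin (n + 1) =>
          ((t i - a 0) / (a (Fin.last n) - t i)) ^ (l * (a j - a 0))) := by
  have hti0 : ∀ i, a 0 < t i := fun i => ht0.trans_le (ht.monotone (Fin.zero_le i))
  have htin : ∀ i, t i < a (Fin.last n) := fun i => (ht.monotone (Fin.le_last i)).trans_lt htn
  simp only [gtBernstein_eq_mul_rpow a c hl (hti0 _) (htin _)]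
  exact isTotallyPositive_of_mul_mul_iff
    (fun i => Real.rpow_pos_of_pos (mul_pos hl (sub_pos.2 (htin i))) _) hc _

/-- For nodes `a 0 ≤ a 1 ≤ ⋯ ≤ a n` with `a 0 < a n`, coefficients
`c i > 0`, `l > 0`, and an increasing sequence `a 0 < t 0 < t 1 < ⋯ < t n < a n`,
with `x i = (t i − a 0)/(a n − t i)` and `k i = a i − a 0`, the collocation matrix
`B = [β_{a_j}(t_i)]` is totally positive if and only if `A = [x i ^ (l * k j)]`
is totally positive. -/
theorem gtBernstein_collocation_TP_iff
    (n : ℕ) (a c : Fin (n + 1) → ℝ) (l : ℝ)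
    (ha : Monotone a) (ha' : a 0 < a (Fin.last n))
    (hc : ∀ i, 0 < c i) (hl : 0 < l)
    (t : Fin (n + 1) → ℝ) (ht : StrictMono t)
    (ht0 : a 0 < t 0) (htn : t (Fin.last n) < a (Fin.last n)) :
    IsTotallyPositive
        (Matrix.of fun i j : Fin (n + 1) => gtBernstein n a c l j (t i)) ↔
      IsTotallyPositive
        (Matrix.of fun i j : Fin (n + 1) =>
          ((t i - a 0) / (a (Fin.last n) - t i)) ^ (l * (a j - a 0))) :=
  gtBernstein_collocation_TP_iff_general n a c l hc hl t ht ht0 htn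
end

section
/- Let a_0 < a_1 < ⋯ < a_n be real numbers, let c_{a_0}, …, c_{a_n} > 0 and l > 0, and let β_{a_i} be the GT-Bernstein basis functions. Then for every strictly increasing sequence a_0 < t_0 < t_1 < ⋯ < t_n < a_n, the determinant of the collocation matrix B = [β_{a_j}(t_i)]_{i,j=0}^{n} is strictly positive; in particular, B is nonsingular. -/
/-!
With `X = l (t - a₀)`, `Y = l (aₙ - t)` and `p_j = l (a_j - a₀)` one has
`β_{a_j}(t) = Y ^ (l (aₙ - a₀)) · c_j · exp (p_j · log (X / Y))`, so the collocation matrix is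
the exponential kernel matrix `[exp (p_j x_i)]`, with `p` and `x_i = log (X_i / Y_i)` strictly
increasing, scaled by positive factors on rows and columns. That determinant never vanishes,
since by Rolle's theorem an exponential sum with `m` frequencies has fewer than `m` zeros unless
it is trivial. Deforming the frequencies linearly to `0, 1, …, n` therefore cannot change its
sign, and at the end it is the Vandermonde determinant of the increasing `exp x_i`, which is
positive.
-/

open Real Finset

lemma hasDerivAt_sum_mul_exp {ι : Type*} [Fintype ι] (c q : ι → ℝ) (y : ℝ) :
    HasDerivAt (fun y => ∑ j, c j * exp (q j * y)) (∑ j, c j * q j * exp (q j * y)) y := by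
  refine HasDerivAt.fun_sum fun j _ => ?_
  simpa [mul_assoc, mul_comm (q j)] using
    (((hasDerivAt_id y).const_mul (q j)).exp).const_mul (c j)

lemma exists_strictMono_deriv_eq_zero_s5 {f f' : ℝ → ℝ} {m : ℕ} {x : Fin (m + 1) → ℝ}
    (hx : StrictMono x) (hf : ∀ y, HasDerivAt f (f' y) y) (hzero : ∀ i, f (x i) = 0) :
    ∃ y : Fin m → ℝ, StrictMono y ∧ ∀ i, f' (y i) = 0 := by
  have hcont : Continuous f := continuous_iff_continuousAt.2 fun y => (hf y).continuousAt
  have hrolle : ∀ i : Fin m, ∃ y ∈ Set.Ioo (x i.castSucc) (x i.succ), f' y = 0 := fun i =>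
    exists_hasDerivAt_eq_zero (hx i.castSucc_lt_succ) hcont.continuousOn
      (by rw [hzero, hzero]) fun y _ => hf y
  choose y hy hy' using hrolle
  refine ⟨y, fun i k hik => ?_, hy'⟩
  calc y i < x i.succ := (hy i).2
    _ ≤ x k.castSucc := hx.monotone (Fin.succ_le_castSucc_iff.2 hik)
    _ < y k := (hy k).1

theorem eq_zero_of_sum_mul_exp_eq_zero {m : ℕ} {p x c : Fin m → ℝ} (hp : Function.Injective p)
    (hx : StrictMono x) (hzero : ∀ i, ∑ j, c j * exp (p j * x i) = 0) : c = 0 := by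
  induction m with
  | zero => exact Subsingleton.elim _ _
  | succ m ih =>
    -- Dividing by `exp (p 0 * y)` makes the first frequency zero, so differentiating kills it.
    set q : Fin (m + 1) → ℝ := fun j => p j - p 0 with hq
    have hzero' : ∀ i, ∑ j, c j * exp (q j * x i) = 0 := fun i => by
      have : ∑ j, c j * exp (q j * x i) = exp (-(p 0 * x i)) * ∑ j, c j * exp (p j * x i) := by
        rw [mul_sum]
        refine sum_congr rfl fun j _ => ?_
        rw [mul_left_comm, ← exp_add, hq]
        ring_nf
      rw [this, hzero i, mul_zero]
    obtain ⟨y, hy, hy'⟩ := exists_strictMono_deriv_eq_zero_s5 hx (hasDerivAt_sum_mul_exp c q) hzero'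
    have hq_succ : ∀ j : Fin m, q j.succ ≠ 0 := fun j => sub_ne_zero.2 (hp.ne (Fin.succ_ne_zero j))
    have hc_succ : ∀ j : Fin m, c j.succ = 0 := by
      have := ih (p := fun j => q j.succ) (c := fun j => c j.succ * q j.succ)
        (fun j k h => Fin.succ_injective _ (hp (sub_left_inj.1 h))) hy fun i => by
          simpa [Fin.sum_univ_succ, q] using hy' i
      exact fun j => (mul_eq_zero.1 (congrFun this j)).resolve_right (hq_succ j)
    have hc0 : c 0 = 0 := by
      simpa [Fin.sum_univ_succ, hc_succ, (exp_pos _).ne'] using hzero 0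
    funext j
    exact Fin.cases hc0 hc_succ j

theorem det_exp_mul_ne_zero {n : ℕ} {p x : Fin n → ℝ} (hp : Function.Injective p)
    (hx : StrictMono x) : (Matrix.of fun i j => exp (p j * x i)).det ≠ 0 := by
  intro hdet
  obtain ⟨c, hc, hmul⟩ := Matrix.exists_mulVec_eq_zero_iff.2 hdet
  refine hc (eq_zero_of_sum_mul_exp_eq_zero hp hx fun i => ?_)
  simpa [Matrix.mulVec, dotProduct, mul_comm] using congrFun hmul i

theorem det_exp_mul_pos {n : ℕ} {p x : Fin n → ℝ} (hp : StrictMono p) (hx : StrictMono x) :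
    0 < (Matrix.of fun i j => exp (p j * x i)).det := by
  set D : ℝ → ℝ := fun s => (Matrix.of fun i j : Fin n => exp (((1 - s) * p j + s * j) * x i)).det
    with hD
  have hD_cont : Continuous D := by
    refine Continuous.matrix_det ?_
    fun_prop
  have hD_ne : ∀ s ∈ Set.Icc (0 : ℝ) 1, D s ≠ 0 := fun s ⟨hs0, hs1⟩ => by
    refine det_exp_mul_ne_zero (StrictMono.injective fun j k hjk => ?_) hx
    have h1 : 0 < p k - p j := sub_pos.2 (hp hjk)
    have h2 : (0 : ℝ) < k - j := sub_pos.2 (by exact_mod_cast hjk)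
    rcases hs1.lt_or_eq with hs1 | rfl
    · nlinarith [mul_pos (sub_pos.2 hs1) h1, mul_nonneg hs0 h2.le]
    · linarith
  have hD_one : 0 < D 1 := by
    have : D 1 = (Matrix.vandermonde (exp ∘ x)).det := by
      simp [hD, Matrix.vandermonde, ← exp_nat_mul]
    rw [this, Matrix.det_vandermonde]
    exact prod_pos fun i _ => prod_pos fun j hj =>
      sub_pos.2 (exp_strictMono (hx (mem_Ioi.1 hj)))
  have hD_zero : 0 < D 0 := by
    by_contra! h
    obtain ⟨s, hs, hs0⟩ := intermediate_value_Icc zero_le_one hD_cont.continuousOn ⟨h, hD_one.le⟩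
    exact hD_ne s hs hs0
  simpa [hD] using hD_zero

lemma gtBernstein_eq_rpow_mul_exp {n : ℕ} {a : Fin (n + 1) → ℝ} (c : Fin (n + 1) → ℝ) {l : ℝ}
    (j : Fin (n + 1)) {t : ℝ} (hl : 0 < l) (ht0 : a 0 < t) (htn : t < a (Fin.last n)) :
    gtBernstein n a c l j t = (l * (a (Fin.last n) - t)) ^ (l * (a (Fin.last n) - a 0)) *
      (c j * exp (l * (a j - a 0) * (log (l * (t - a 0)) - log (l * (a (Fin.last n) - t))))) := by
  have hX : 0 < l * (t - a 0) := mul_pos hl (sub_pos.2 ht0)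
  have hY : 0 < l * (a (Fin.last n) - t) := mul_pos hl (sub_pos.2 htn)
  rw [gtBernstein, rpow_def_of_pos hX, rpow_def_of_pos hY, rpow_def_of_pos hY, mul_assoc,
    ← exp_add, mul_left_comm (exp _) (c j), ← exp_add]
  congr 2
  ring

/-- For strictly increasing nodes `a 0 < a 1 < ⋯ < a n`, coefficients
`c i > 0`, `l > 0`, and any strictly increasing sequence
`a 0 < t 0 < t 1 < ⋯ < t n < a n`, the determinant of the collocation matrix
`B = [β_{a_j}(t_i)]` is strictly positive. -/
theorem gtBernstein_collocation_det_pos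
    (n : ℕ) (a c : Fin (n + 1) → ℝ) (l : ℝ)
    (ha : StrictMono a) (hc : ∀ i, 0 < c i) (hl : 0 < l)
    (t : Fin (n + 1) → ℝ) (ht : StrictMono t)
    (ht0 : a 0 < t 0) (htn : t (Fin.last n) < a (Fin.last n)) :
    0 < (Matrix.of fun i j : Fin (n + 1) => gtBernstein n a c l j (t i)).det := by
  have hX : ∀ i, 0 < l * (t i - a 0) := fun i =>
    mul_pos hl (sub_pos.2 (ht0.trans_le (ht.monotone (Fin.zero_le i))))
  have hY : ∀ i, 0 < l * (a (Fin.last n) - t i) := fun i =>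
    mul_pos hl (sub_pos.2 ((ht.monotone (Fin.le_last i)).trans_lt htn))
  set x : Fin (n + 1) → ℝ := fun i => log (l * (t i - a 0)) - log (l * (a (Fin.last n) - t i))
  have hx : StrictMono x := fun i k hik => by
    have := ht hik
    exact sub_lt_sub (log_lt_log (hX i) (by gcongr)) (log_lt_log (hY k) (by gcongr))
  have hp : StrictMono fun j => l * (a j - a 0) := fun i k hik =>
    mul_lt_mul_of_pos_left (sub_lt_sub_right (ha hik) _) hl
  have hB : (Matrix.of fun i j : Fin (n + 1) => gtBernstein n a c l j (t i)) =
      Matrix.of fun i j => (l * (a (Fin.last n) - t i)) ^ (l * (a (Fin.last n) - a 0)) *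
        (Matrix.of fun i j => c j * exp (l * (a j - a 0) * x i)) i j := by
    ext i j
    exact gtBernstein_eq_rpow_mul_exp c j hl
      (ht0.trans_le (ht.monotone (Fin.zero_le i))) ((ht.monotone (Fin.le_last i)).trans_lt htn)
  have hE := Matrix.det_mul_row c (.of fun i j => exp (l * (a j - a 0) * x i))
  simp only [Matrix.of_apply] at hE
  rw [hB, Matrix.det_mul_column, hE]
  exact mul_pos (prod_pos fun i _ => rpow_pos_of_pos (hY i) _)
    (mul_pos (prod_pos fun j _ => hc j) (det_exp_mul_pos hp hx))
end

section
/- Let a_0 < a_1 < ⋯ < a_n be real numbers, let c_{a_0}, …, c_{a_n} > 0, l > 0, and weights ω_{a_0}, …, ω_{a_n} > 0, and let 𝒯_{a_i} be the rational GT-Bernstein basis functions. Then for every strictly increasing sequence a_0 ≤ t_0 < t_1 < ⋯ < t_n ≤ a_n (where the endpoints t_0 = a_0 and t_n = a_n are allowed), the determinant of the collocation matrix C = [𝒯_{a_j}(t_i)]_{i,j=0}^{n} is strictly positive; in particular, C is nonsingular. -/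
/-- The rational GT-Bernstein basis functions
`𝒯_{a_i}(t) = ω_{a_i} β_{a_i}(t) / Σ_j ω_{a_j} β_{a_j}(t)`. -/
noncomputable def ratGTBernstein (n : ℕ) (a c : Fin (n + 1) → ℝ) (l : ℝ)
    (ω : Fin (n + 1) → ℝ) (i : Fin (n + 1)) (t : ℝ) : ℝ :=
  ω i * gtBernstein n a c l i t / ∑ j, ω j * gtBernstein n a c l j t

/-!
On `(a₀, aₙ)` the kernel factors as `(l(aₙ - t))^{l(aₙ - a₀)} · ((t - a₀)/(aₙ - t))^{l(b - a₀)}`,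
so an interior collocation matrix is a generalized Vandermonde matrix `[u_i ^ e_j]`
(`0 < u₀ < ⋯`, `e₀ < ⋯`) scaled by positive row and column factors. Its determinant cannot
vanish, since by Rolle's theorem a nonzero sum `∑_{j<m} c_j x^{e_j}` has fewer than `m` positive
zeros; moving the exponents linearly to `0, 1, …` then connects it to the classical
Vandermonde determinant without crossing zero, so it is positive. A node at an endpoint makes its
row a multiple of a unit vector, and expanding along that row leaves a smaller matrix of the same
kind. The rational basis only rescales rows by the positive denominators and columns by the
weights.
-/

open Matrix Set Finset

theorem exists_strictMono_hasDerivAt_eq_zero {m : ℕ} {f f' : ℝ → ℝ} {x : Fin (m + 1) → ℝ}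
    (hx : StrictMono x) (hf : ∀ y ∈ Ici (x 0), HasDerivAt f (f' y) y)
    (hfx : ∀ i, f (x i) = 0) :
    ∃ y : Fin m → ℝ, StrictMono y ∧ ∀ i, x 0 < y i ∧ f' (y i) = 0 := by
  have hx₀ : ∀ i, x 0 ≤ x i := fun i => hx.monotone (Fin.zero_le i)
  have rolle : ∀ i : Fin m, ∃ y ∈ Ioo (x i.castSucc) (x i.succ), f' y = 0 := fun i =>
    exists_hasDerivAt_eq_zero (hx Fin.castSucc_lt_succ)
      (fun y hy => (hf y ((hx₀ _).trans hy.1)).continuousAt.continuousWithinAt)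
      (by rw [hfx, hfx]) fun y hy => hf y ((hx₀ _).trans hy.1.le)
  choose y hy hy' using rolle
  refine ⟨y, fun i j hij => ?_, fun i => ⟨(hx₀ _).trans_lt (hy i).1, hy' i⟩⟩
  calc y i < x i.succ := (hy i).2
    _ ≤ x j.castSucc := hx.monotone (Fin.succ_le_castSucc_iff.mpr hij)
    _ < y j := (hy j).1

theorem eq_zero_of_forall_sum_mul_rpow_eq_zero {m : ℕ} {c x e : Fin m → ℝ}
    (hx : StrictMono x) (hx₀ : ∀ i, 0 < x i) (he : StrictMono e)
    (hsum : ∀ i, ∑ j, c j * x i ^ e j = 0) : c = 0 := by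
  induction m with
  | zero => exact Subsingleton.elim _ _
  | succ m ih =>
    -- dividing by `x ^ e 0` and differentiating removes the first term
    set g : ℝ → ℝ := fun y => ∑ j, c j * y ^ (e j - e 0)
    have hg : ∀ y ∈ Ici (x 0),
        HasDerivAt g (∑ j, c j * ((e j - e 0) * y ^ (e j - e 0 - 1))) y := fun y hy =>
      HasDerivAt.fun_sum fun j _ =>
        (Real.hasDerivAt_rpow_const (Or.inl ((hx₀ 0).trans_le hy).ne')).const_mul (c j)
    have hgx : ∀ i, g (x i) = 0 := fun i => by
      simp only [g, Real.rpow_sub (hx₀ i), ← mul_div_assoc, ← Finset.sum_div, hsum i, zero_div]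
    obtain ⟨y, hy, hy₀⟩ := exists_strictMono_hasDerivAt_eq_zero hx hg hgx
    have htail : (fun j : Fin m => c j.succ * (e j.succ - e 0)) = 0 := by
      refine ih (e := fun j : Fin m => e j.succ - e 0 - 1) hy (fun i => (hx₀ 0).trans (hy₀ i).1)
        (fun j k hjk => by simpa using he (Fin.succ_lt_succ_iff.mpr hjk)) fun i => ?_
      rw [← (hy₀ i).2, Fin.sum_univ_succ, sub_self, zero_mul, mul_zero, zero_add]
      exact Finset.sum_congr rfl fun j _ => by ring
    have hc_succ : ∀ j : Fin m, c j.succ = 0 := fun j =>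
      (mul_eq_zero.mp (congrFun htail j)).resolve_right (sub_pos.mpr (he j.succ_pos)).ne'
    have hc₀ : c 0 = 0 := by
      have h := hsum 0
      simp only [Fin.sum_univ_succ, hc_succ, zero_mul, Finset.sum_const_zero, add_zero] at h
      exact (mul_eq_zero.mp h).resolve_right (Real.rpow_pos_of_pos (hx₀ 0) _).ne'
    exact funext fun j => Fin.cases hc₀ hc_succ j

theorem det_rpow_ne_zero {m : ℕ} {x e : Fin m → ℝ} (hx : StrictMono x) (hx₀ : ∀ i, 0 < x i)
    (he : StrictMono e) : (of fun i j => x i ^ e j).det ≠ 0 := by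
  intro h
  obtain ⟨c, hc, hMc⟩ := exists_mulVec_eq_zero_iff.mpr h
  refine hc (eq_zero_of_forall_sum_mul_rpow_eq_zero hx hx₀ he fun i => ?_)
  simpa [mulVec, dotProduct, mul_comm] using congrFun hMc i

theorem det_rpow_pos {m : ℕ} {x e : Fin m → ℝ} (hx : StrictMono x) (hx₀ : ∀ i, 0 < x i)
    (he : StrictMono e) : 0 < (of fun i j => x i ^ e j).det := by
  set e' : ℝ → Fin m → ℝ := fun τ j => (1 - τ) * e j + τ * j
  set F : ℝ → ℝ := fun τ => (of fun i j => x i ^ e' τ j).det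
  have he' : ∀ τ ∈ Icc (0 : ℝ) 1, StrictMono (e' τ) := fun τ hτ j k hjk => by
    have h₁ := he hjk
    have h₂ : (j : ℝ) < k := by exact_mod_cast hjk
    rcases hτ.1.eq_or_lt with rfl | hτ₀
    · simpa [e'] using h₁
    · simp only [e']; nlinarith [hτ.2]
  have hF : Continuous F := Continuous.matrix_det <| continuous_matrix fun i j =>
    continuous_const.rpow (by fun_prop) fun _ => Or.inl (hx₀ i).ne'
  have hF₁ : 0 < F 1 := by
    have : F 1 = (vandermonde x).det := by
      simp [F, e', vandermonde]
    rw [this, det_vandermonde]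
    exact prod_pos fun i _ => prod_pos fun j hj => sub_pos.mpr (hx (mem_Ioi.mp hj))
  have hF₀ : F 0 = (of fun i j => x i ^ e j).det := by simp [F, e']
  by_contra! h
  obtain ⟨τ, hτ, hFτ⟩ :=
    intermediate_value_Icc zero_le_one hF.continuousOn ⟨hF₀ ▸ h, hF₁.le⟩
  exact det_rpow_ne_zero hx hx₀ (he' τ hτ) hFτ

theorem Matrix.det_eq_mul_det_submatrix_succAbove_of_row {R : Type*} [CommRing R] {m : ℕ}
    (M : Matrix (Fin (m + 1)) (Fin (m + 1)) R) (i : Fin (m + 1)) (h : ∀ j ≠ i, M i j = 0) :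
    M.det = M i i * (M.submatrix i.succAbove i.succAbove).det := by
  rw [det_succ_row M i, Finset.sum_eq_single i (fun j _ hj => by rw [h j hj, mul_zero, zero_mul])
    (by simp), ← two_mul, pow_mul, neg_one_sq, one_pow, one_mul]

theorem Real.rpow_pos_of_nonneg_of_imp {x y : ℝ} (hx : 0 ≤ x) (hy : x = 0 → y = 0) :
    0 < x ^ y := by
  rcases hx.eq_or_lt with rfl | hx
  · rw [hy rfl, Real.rpow_zero]; exact one_pos
  · exact Real.rpow_pos_of_pos hx y

/-- The GT-Bernstein kernel with the endpoints as parameters, so that deleting the first or last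
node leaves a collocation matrix of the same form. -/
noncomputable def gtKernel (l a₀ aₙ b t : ℝ) : ℝ :=
  (l * (t - a₀)) ^ (l * (b - a₀)) * (l * (aₙ - t)) ^ (l * (aₙ - b))

theorem gtBernstein_eq_mul_gtKernel (n : ℕ) (a c : Fin (n + 1) → ℝ) (l : ℝ) (i : Fin (n + 1))
    (t : ℝ) : gtBernstein n a c l i t = c i * gtKernel l (a 0) (a (Fin.last n)) (a i) t :=
  mul_assoc _ _ _

section gtKernel

variable {l a₀ aₙ b t : ℝ}

theorem gtKernel_nonneg (hl : 0 ≤ l) (h₀ : a₀ ≤ t) (hₙ : t ≤ aₙ) : 0 ≤ gtKernel l a₀ aₙ b t :=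
  mul_nonneg (Real.rpow_nonneg (mul_nonneg hl (sub_nonneg.mpr h₀)) _)
    (Real.rpow_nonneg (mul_nonneg hl (sub_nonneg.mpr hₙ)) _)

theorem gtKernel_pos (hl : 0 < l) (h₀ : a₀ ≤ t) (hₙ : t ≤ aₙ) (hb₀ : t = a₀ → b = a₀)
    (hbₙ : t = aₙ → b = aₙ) : 0 < gtKernel l a₀ aₙ b t := by
  have base_eq_zero {u v : ℝ} (h : l * (u - v) = 0) : u = v :=
    sub_eq_zero.mp ((mul_eq_zero.mp h).resolve_left hl.ne')
  refine mul_pos (Real.rpow_pos_of_nonneg_of_imp (mul_nonneg hl.le (sub_nonneg.mpr h₀)) ?_)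
    (Real.rpow_pos_of_nonneg_of_imp (mul_nonneg hl.le (sub_nonneg.mpr hₙ)) ?_)
  · intro h; rw [hb₀ (base_eq_zero h), sub_self, mul_zero]
  · intro h; rw [hbₙ (base_eq_zero h).symm, sub_self, mul_zero]

theorem gtKernel_left_eq_zero (hl : 0 < l) (hb : a₀ < b) : gtKernel l a₀ aₙ b a₀ = 0 := by
  rw [gtKernel, sub_self, mul_zero, Real.zero_rpow (mul_pos hl (sub_pos.mpr hb)).ne', zero_mul]

theorem gtKernel_right_eq_zero (hl : 0 < l) (hb : b < aₙ) : gtKernel l a₀ aₙ b aₙ = 0 := by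
  rw [gtKernel, sub_self, mul_zero, Real.zero_rpow (mul_pos hl (sub_pos.mpr hb)).ne', mul_zero]

theorem gtKernel_eq_of_mem_Ioo (hl : 0 < l) (ht : t ∈ Ioo a₀ aₙ) :
    gtKernel l a₀ aₙ b t =
      (l * (aₙ - t)) ^ (l * (aₙ - a₀)) * ((t - a₀) / (aₙ - t)) ^ (l * (b - a₀)) := by
  have h₀ : 0 < t - a₀ := sub_pos.mpr ht.1
  have hₙ : 0 < aₙ - t := sub_pos.mpr ht.2
  rw [gtKernel, show l * (aₙ - b) = l * (aₙ - a₀) - l * (b - a₀) by ring,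
    Real.rpow_sub (mul_pos hl hₙ), ← mul_div_mul_left (t - a₀) (aₙ - t) hl.ne',
    Real.div_rpow (mul_pos hl h₀).le (mul_pos hl hₙ).le]
  ring

end gtKernel

section det_gtKernel

variable {l a₀ aₙ : ℝ}

theorem det_gtKernel_pos_of_mem_Ioo (hl : 0 < l) {m : ℕ} {s b : Fin m → ℝ} (hs : StrictMono s)
    (hb : StrictMono b) (hs_mem : ∀ i, s i ∈ Ioo a₀ aₙ) :
    0 < (of fun i j => gtKernel l a₀ aₙ (b j) (s i)).det := by
  have h₀ : ∀ i, 0 < s i - a₀ := fun i => sub_pos.mpr (hs_mem i).1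
  have hₙ : ∀ i, 0 < aₙ - s i := fun i => sub_pos.mpr (hs_mem i).2
  have hu : StrictMono fun i => (s i - a₀) / (aₙ - s i) := fun i j hij =>
    div_lt_div₀ (sub_lt_sub_right (hs hij) a₀) (sub_le_sub_left (hs hij).le aₙ) (h₀ j).le (hₙ j)
  have he : StrictMono fun j => l * (b j - a₀) := fun i j hij =>
    mul_lt_mul_of_pos_left (sub_lt_sub_right (hb hij) a₀) hl
  have hM : (of fun i j => gtKernel l a₀ aₙ (b j) (s i)) = of fun i j =>
      (l * (aₙ - s i)) ^ (l * (aₙ - a₀)) *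
        (of fun i j => ((s i - a₀) / (aₙ - s i)) ^ (l * (b j - a₀))) i j := by
    ext i j
    exact gtKernel_eq_of_mem_Ioo hl (hs_mem i)
  rw [hM, det_mul_column]
  exact mul_pos (prod_pos fun i _ => Real.rpow_pos_of_pos (mul_pos hl (hₙ i)) _)
    (det_rpow_pos hu (fun i => div_pos (h₀ i) (hₙ i)) he)

theorem det_gtKernel_pos (hl : 0 < l) {m : ℕ} {s b : Fin (m + 1) → ℝ} (hs : StrictMono s)
    (hb : StrictMono b) (hs₀ : a₀ ≤ s 0) (hsₘ : s (Fin.last m) ≤ aₙ)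
    (hb₀ : s 0 = a₀ → b 0 = a₀) (hbₘ : s (Fin.last m) = aₙ → b (Fin.last m) = aₙ) :
    0 < (of fun i j => gtKernel l a₀ aₙ (b j) (s i)).det := by
  induction m with
  | zero => rw [det_fin_one]; exact gtKernel_pos hl hs₀ hsₘ hb₀ hbₘ
  | succ m ih =>
    have hs₀ₘ : s 0 < s (Fin.last (m + 1)) := hs (Fin.last_pos)
    by_cases h₀ : s 0 = a₀
    · rw [det_eq_mul_det_submatrix_succAbove_of_row _ 0 fun j hj => by
        simpa [h₀] using gtKernel_left_eq_zero (aₙ := aₙ) hl (hb₀ h₀ ▸ hb (Fin.pos_of_ne_zero hj))]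
      refine mul_pos (gtKernel_pos hl hs₀ (hs₀ₘ.le.trans hsₘ) hb₀
        fun h => absurd (h ▸ hs₀ₘ) hsₘ.not_gt) ?_
      rw [Fin.succAbove_zero]
      exact ih (s := s ∘ Fin.succ) (hs.comp Fin.strictMono_succ) (hb.comp Fin.strictMono_succ)
        (h₀ ▸ (hs (Fin.succ_pos 0)).le) hsₘ 
        (fun h => absurd h (h₀ ▸ hs (Fin.succ_pos 0) : a₀ < s (Fin.succ 0)).ne') hbₘ
    by_cases hₙ : s (Fin.last _) = aₙ
    · rw [det_eq_mul_det_submatrix_succAbove_of_row _ (Fin.last _) fun j hj => by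
        simpa [hₙ] using gtKernel_right_eq_zero (a₀ := a₀) hl
          (hbₘ hₙ ▸ hb (lt_of_le_of_ne (Fin.le_last j) hj))]
      refine mul_pos (gtKernel_pos hl (hs₀.trans hs₀ₘ.le) hsₘ
        (fun h => absurd (h ▸ hs₀ₘ) hs₀.not_gt) hbₘ) ?_
      rw [Fin.succAbove_last]
      exact ih (s := s ∘ Fin.castSucc) (hs.comp Fin.strictMono_castSucc)
        (hb.comp Fin.strictMono_castSucc) hs₀ (hₙ ▸ (hs (Fin.castSucc_lt_last _)).le) hb₀
        fun h => absurd h (hₙ ▸ hs (Fin.castSucc_lt_last (Fin.last m)) : s _ < aₙ).ne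
    · exact det_gtKernel_pos_of_mem_Ioo hl hs hb fun i =>
        ⟨(lt_of_le_of_ne hs₀ (Ne.symm h₀)).trans_le (hs.monotone (Fin.zero_le i)),
          (hs.monotone (Fin.le_last i)).trans_lt (lt_of_le_of_ne hsₘ hₙ)⟩

end det_gtKernel

theorem Matrix.sum_mul_apply_pos_of_det_ne_zero {n R : Type*} [Fintype n] [DecidableEq n]
    [CommRing R] [PartialOrder R] [IsStrictOrderedRing R] {B : Matrix n n R} (hB : B.det ≠ 0)
    (hB₀ : ∀ i j, 0 ≤ B i j) {w : n → R} (hw : ∀ j, 0 < w j) (i : n) :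
    0 < ∑ j, w j * B i j := by
  obtain ⟨j, hj⟩ : ∃ j, B i j ≠ 0 := by
    by_contra! h
    exact hB (det_eq_zero_of_row_eq_zero i h)
  exact sum_pos' (fun j _ => mul_nonneg (hw j).le (hB₀ i j))
    ⟨j, mem_univ j, mul_pos (hw j) ((hB₀ i j).lt_of_ne' hj)⟩

/-- For strictly increasing nodes `a 0 < a 1 < ⋯ < a n`, coefficients
`c i > 0`, `l > 0`, weights `ω i > 0`, and any strictly increasing sequence
`a 0 ≤ t 0 < t 1 < ⋯ < t n ≤ a n` (endpoints allowed), the determinant of the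
collocation matrix `C = [𝒯_{a_j}(t_i)]` is strictly positive. -/
theorem ratGTBernstein_collocation_det_pos
    (n : ℕ) (a c : Fin (n + 1) → ℝ) (l : ℝ) (ω : Fin (n + 1) → ℝ)
    (ha : StrictMono a) (hc : ∀ i, 0 < c i) (hl : 0 < l) (hω : ∀ i, 0 < ω i)
    (t : Fin (n + 1) → ℝ) (ht : StrictMono t)
    (ht0 : a 0 ≤ t 0) (htn : t (Fin.last n) ≤ a (Fin.last n)) :
    0 < (Matrix.of fun i j : Fin (n + 1) => ratGTBernstein n a c l ω j (t i)).det := by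
  set B : Matrix (Fin (n + 1)) (Fin (n + 1)) ℝ := of fun i j => gtBernstein n a c l j (t i)
  have hB_eq : B = of fun i j =>
      c j * (of fun i j => gtKernel l (a 0) (a (Fin.last n)) (a j) (t i)) i j := by
    ext i j
    exact gtBernstein_eq_mul_gtKernel n a c l j (t i)
  have hB₀ : ∀ i j, 0 ≤ B i j := fun i j => by
    rw [hB_eq]
    exact mul_nonneg (hc j).le (gtKernel_nonneg hl.le (ht0.trans (ht.monotone (Fin.zero_le i)))
      ((ht.monotone (Fin.le_last i)).trans htn))
  have hB : 0 < B.det := by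
    rw [hB_eq, det_mul_row]
    exact mul_pos (prod_pos fun j _ => hc j)
      (det_gtKernel_pos hl ht ha ht0 htn (fun _ => rfl) fun _ => rfl)
  have hS := sum_mul_apply_pos_of_det_ne_zero hB.ne' hB₀ hω
  have hC : (of fun i j => ratGTBernstein n a c l ω j (t i)) =
      of fun i j => (∑ k, ω k * B i k)⁻¹ * (of fun i j => ω j * B i j) i j := by
    ext i j
    simp only [ratGTBernstein, B, of_apply, div_eq_inv_mul]
  rw [hC, det_mul_column, det_mul_row]
  exact mul_pos (prod_pos fun i _ => inv_pos.mpr (hS i)) (mul_pos (prod_pos fun j _ => hω j) hB)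
end
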